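/- If in state (M, F) every literal l of the trail M satisfies (F @ decisionsTo l M) ⊨ l, and M falsifies F, then the formula F @ (decisions M), i.e., F together with unit clauses for all decision literals of M, is unsatisfiable. -/

import Mathlib

/-! A model of `F` together with all decision literals of `M` is in particular a model of `F`
together with the decisions preceding any trail literal `l`, so by hypothesis it contains every
literal of `M`. Being consistent, it then falsifies the clause of `F` that `M` falsifies. -/

namespace SatFormal

/-- Propositional literals: positive or negative variables (variables are naturals). -/
inductive Literal where
  | Pos : Nat → Literal
  | Neg : Nat → Literal
deriving DecidableEq, Repr

/-- The variable of a literal. -/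
def Literal.var : Literal → Nat
  | .Pos n => n
  | .Neg n => n

/-- The opposite literal. -/
def Literal.opp : Literal → Literal
  | .Pos n => .Neg n
  | .Neg n => .Pos n

abbrev Clause := List Literal
abbrev Formula := List Clause
/-- A trail is a list of annotated literals: (literal, decision flag). -/
abbrev Trail := List (Literal × Bool)

/-- Underlying literals of a trail. -/
def elements (M : Trail) : List Literal := M.map Prod.fst
/-- Decision literals of a trail. -/
def decisions (M : Trail) : List Literal := (M.filter (fun a => a.2)).map Prod.fst
/-- Number of decision literals. -/
def currentLevel (M : Trail) : Nat := (M.filter (fun a => a.2)).length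

/-- Prefix of the trail up to and including the first occurrence of literal `l`. -/
def prefixTo (l : Literal) (M : Trail) : Trail :=
  M.takeWhile (fun a => decide (a.1 ≠ l)) ++ (M.dropWhile (fun a => decide (a.1 ≠ l))).take 1

/-- Decision literals preceding the first occurrence of `l` (including `l` if it is one). -/
def decisionsTo (l : Literal) (M : Trail) : List Literal := decisions (prefixTo l M)

/-- Decision level of a literal in a trail. -/
def levelOf (l : Literal) (M : Trail) : Nat := (decisionsTo l M).length

/-- Longest prefix of the trail containing only elements of level ≤ `lv`. -/
def prefixToLevel (lv : Nat) : Trail → Trail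
  | [] => []
  | a :: M =>
      if a.2 then (if 0 < lv then a :: prefixToLevel (lv - 1) M else [])
      else a :: prefixToLevel lv M

/-- The last decision literal of a trail (default `Pos 0` when there is none). -/
def lastDecision (M : Trail) : Literal := (decisions M).getLastD (Literal.Pos 0)

/-- The prefix of the trail before its last decision literal. -/
def prefixBeforeLastDecision (M : Trail) : Trail :=
  ((M.reverse.dropWhile (fun a => !a.2)).tail).reverse

/-- A clause is true in a valuation. -/
def clauseTrue (v : List Literal) (c : Clause) : Prop := ∃ l ∈ c, l ∈ v
/-- A formula is true in a valuation. -/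
def formulaTrue (v : List Literal) (F : Formula) : Prop := ∀ c ∈ F, clauseTrue v c
/-- A clause is false in a valuation. -/
def clauseFalse (v : List Literal) (c : Clause) : Prop := ∀ l ∈ c, l.opp ∈ v
/-- A formula is false in a valuation. -/
def formulaFalse (v : List Literal) (F : Formula) : Prop := ∃ c ∈ F, clauseFalse v c
/-- Consistency of a valuation. -/
def consistent (v : List Literal) : Prop := ¬ ∃ l, l ∈ v ∧ Literal.opp l ∈ v
/-- A model of a formula. -/
def isModel (v : List Literal) (F : Formula) : Prop := consistent v ∧ formulaTrue v F
/-- Satisfiability. -/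
def sat (F : Formula) : Prop := ∃ v, isModel v F
/-- A formula entails a clause. -/
def entailsClause (F : Formula) (c : Clause) : Prop := ∀ v, isModel v F → clauseTrue v c
/-- A formula entails a literal. -/
def entailsLit (F : Formula) (l : Literal) : Prop := ∀ v, isModel v F → l ∈ v
/-- Logical equivalence of formulae. -/
def equivFormula (F1 F2 : Formula) : Prop := ∀ v, isModel v F1 ↔ isModel v F2

/-- Variables of a formula. -/
def varsF (F : Formula) : Set Nat := {n | ∃ c ∈ F, ∃ l ∈ c, Literal.var l = n}
/-- Variables of a valuation. -/
def varsV (v : List Literal) : Set Nat := {n | ∃ l ∈ v, Literal.var l = n}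
/-- Variables of a trail. -/
def varsT (M : Trail) : Set Nat := varsV (elements M)

/-- The formula of unit clauses corresponding to a list of literals. -/
def valToForm (v : List Literal) : Formula := v.map (fun l => [l])

/-- A clause is unit in a valuation with unit literal `l`. -/
def isUnit (c : Clause) (l : Literal) (v : List Literal) : Prop :=
  l ∈ c ∧ l ∉ v ∧ l.opp ∉ v ∧ ∀ l' ∈ c, l' ≠ l → Literal.opp l' ∈ v

/-- `a` precedes `b` in the list `v` (first positions compared). -/
def precedes (a b : Literal) (v : List Literal) : Prop :=
  a ∈ v ∧ b ∈ v ∧ v.idxOf a < v.idxOf b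

/-- A clause `c` is a reason for propagation of `l` in valuation `v`. -/
def isReason (c : Clause) (l : Literal) (v : List Literal) : Prop :=
  l ∈ c ∧ l ∈ v ∧ ∀ l' ∈ c, l' ≠ l → Literal.opp l' ∈ v ∧ precedes (Literal.opp l') l v

/-- `l` is the literal of `c` asserted last in `v`. -/
def isLastAsserted (l : Literal) (c : List Literal) (v : List Literal) : Prop :=
  l ∈ c ∧ l ∈ v ∧ ∀ l' ∈ c, l' ∈ v → l' = l ∨ precedes l' l v

/-- The list of opposites of the literals of a clause. -/
def oppC (c : Clause) : List Literal := c.map Literal.opp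

/-- `lv` is a backjump level for literal `l` and clause `c` w.r.t. trail `M`. -/
def isBackjumpLevel (lv : Nat) (l : Literal) (c : Clause) (M : Trail) : Prop :=
  clauseFalse (elements M) c ∧ isLastAsserted l.opp (oppC c) (elements M) ∧
  lv < levelOf l.opp M ∧ ∀ l' ∈ c, l' ≠ l → levelOf (Literal.opp l') M ≤ lv

/-- Minimal backjump level. -/
def isMinimalBackjumpLevel (lv : Nat) (l : Literal) (c : Clause) (M : Trail) : Prop :=
  isBackjumpLevel lv l c M ∧ ∀ lv' < lv, ¬ isBackjumpLevel lv' l c M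

/-- Unique implication point condition. -/
def isUIP (l : Literal) (c : Clause) (M : Trail) : Prop :=
  clauseFalse (elements M) c ∧ isLastAsserted l.opp (oppC c) (elements M) ∧
  ∀ l' ∈ c, l' ≠ l → levelOf (Literal.opp l') M < levelOf l.opp M

/-- Resolution of clauses `C` and `c` over the literal `l`. -/
def resolve (C c : Clause) (l : Literal) : Clause :=
  C.filter (fun x => decide (x ≠ l)) ++ c.filter (fun x => decide (x ≠ l.opp))

/-- Lexicographic extension of a relation to lists. -/
def lexExt {X : Type _} (r : X → X → Prop) (s t : List X) : Prop :=
  (∃ rr, s = t ++ rr ∧ rr ≠ []) ∨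
  (∃ rr s' t' a b, s = rr ++ a :: s' ∧ t = rr ++ b :: t' ∧ r a b)

/-- Ordering on annotated literals: decisions are greater than non-decisions. -/
def litSucc (a b : Literal × Bool) : Prop := a.2 = true ∧ b.2 = false

/-- Trail ordering: lexicographic extension of `litSucc`. -/
def trailSucc : Trail → Trail → Prop := lexExt litSucc

/-- One step of the multiset extension of a relation. -/
def multExtStep {α : Type _} (r : α → α → Prop) (S1 S2 : Multiset α) : Prop :=
  ∃ (S S2' : Multiset α) (s1 : α), S1 = S + {s1} ∧ S2 = S + S2' ∧ ∀ s2 ∈ S2', r s1 s2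

/-- Multiset extension: transitive closure of `multExtStep`. -/
def multExt {α : Type _} (r : α → α → Prop) : Multiset α → Multiset α → Prop :=
  Relation.TransGen (multExtStep r)

/-- Clause ordering induced by a trail `M` (as a list of literals). -/
def clauseSucc (M : List Literal) (C1 C2 : Clause) : Prop :=
  multExt (fun a b => precedes a b M)
    ((oppC C2).dedup : Multiset Literal) ((oppC C1).dedup : Multiset Literal)

/-! ## Basic DPLL system -/

abbrev DState := Trail × Formula

def decideR (DecVars : Set Nat) (s1 s2 : DState) : Prop :=
  ∃ l : Literal, l.var ∈ DecVars ∧ l ∉ elements s1.1 ∧ l.opp ∉ elements s1.1 ∧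
    s2.1 = s1.1 ++ [(l, true)] ∧ s2.2 = s1.2

def unitPropagateR (s1 s2 : DState) : Prop :=
  ∃ c l, c ∈ s1.2 ∧ isUnit c l (elements s1.1) ∧
    s2.1 = s1.1 ++ [(l, false)] ∧ s2.2 = s1.2

def backtrackR (s1 s2 : DState) : Prop :=
  formulaFalse (elements s1.1) s1.2 ∧ decisions s1.1 ≠ [] ∧
  s2.1 = prefixBeforeLastDecision s1.1 ++ [((lastDecision s1.1).opp, false)] ∧ s2.2 = s1.2

def stepD (DecVars : Set Nat) (s1 s2 : DState) : Prop :=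
  unitPropagateR s1 s2 ∨ backtrackR s1 s2 ∨ decideR DecVars s1 s2

def accepting (DecVars : Set Nat) (s : DState) : Prop :=
  ¬ formulaFalse (elements s.1) s.2 ∧
  ¬ ∃ l : Literal, l.var ∈ DecVars ∧ l ∉ elements s.1 ∧ l.opp ∉ elements s.1

def rejecting (s : DState) : Prop :=
  formulaFalse (elements s.1) s.2 ∧ decisions s.1 = []

/-! ## Conflict analysis system -/

abbrev CState := Trail × Formula × Clause × Bool

def c_decide (DecVars : Set Nat) : CState → CState → Prop :=
  fun (M1, F1, C1, b1) (M2, F2, C2, b2) =>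
    (∃ l : Literal, l.var ∈ DecVars ∧ l ∉ elements M1 ∧ l.opp ∉ elements M1 ∧
      M2 = M1 ++ [(l, true)]) ∧ F2 = F1 ∧ C2 = C1 ∧ b2 = b1

def c_unitPropagate (Vars : Set Nat) : CState → CState → Prop :=
  fun (M1, F1, C1, b1) (M2, F2, C2, b2) =>
    (∃ (c : Clause) (l : Literal), entailsClause F1 c ∧ l.var ∈ Vars ∧
      isUnit c l (elements M1) ∧ M2 = M1 ++ [(l, false)]) ∧
    F2 = F1 ∧ C2 = C1 ∧ b2 = b1

def c_conflict : CState → CState → Prop :=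
  fun (M1, F1, C1, b1) (M2, F2, C2, b2) =>
    b1 = false ∧ (∃ c : Clause, entailsClause F1 c ∧ clauseFalse (elements M1) c ∧ C2 = c) ∧
    M2 = M1 ∧ F2 = F1 ∧ b2 = true ∧ C1 = C1

def c_explain : CState → CState → Prop :=
  fun (M1, F1, C1, b1) (M2, F2, C2, b2) =>
    b1 = true ∧ (∃ (l : Literal) (c : Clause), l ∈ C1 ∧ isReason c l.opp (elements M1) ∧
      entailsClause F1 c ∧ C2 = resolve C1 c l) ∧
    M2 = M1 ∧ F2 = F1 ∧ b2 = true

def c_backjump : CState → CState → Prop :=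
  fun (M1, F1, C1, b1) (M2, F2, C2, b2) =>
    b1 = true ∧ (∃ (l : Literal) (lv : Nat), isBackjumpLevel lv l C1 M1 ∧
      M2 = prefixToLevel lv M1 ++ [(l, false)]) ∧
    F2 = F1 ∧ C2 = [] ∧ b2 = false

def c_learn : CState → CState → Prop :=
  fun (M1, F1, C1, b1) (M2, F2, C2, b2) =>
    b1 = true ∧ C1 ∉ F1 ∧ M2 = M1 ∧ F2 = F1 ++ [C1] ∧ C2 = C1 ∧ b2 = b1

def stepC (F0 : Formula) (DecVars : Set Nat) (s1 s2 : CState) : Prop :=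
  c_decide DecVars s1 s2 ∨ c_unitPropagate (varsF F0 ∪ DecVars) s1 s2 ∨
  c_conflict s1 s2 ∨ c_explain s1 s2 ∨ c_backjump s1 s2 ∨ c_learn s1 s2

/-! ## System with restarts and forgetting -/

abbrev RState := Trail × Formula × Clause × Bool × Bool

def r_decide (F0 : Formula) (DecVars : Set Nat) : RState → RState → Prop :=
  fun (M1, Fl1, C1, cf1, ln1) (M2, Fl2, C2, cf2, ln2) =>
    (∃ l : Literal, l.var ∈ DecVars ∧ l ∉ elements M1 ∧ l.opp ∉ elements M1 ∧
      M2 = M1 ++ [(l, true)]) ∧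
    (¬ ∃ (c : Clause) (l : Literal), c ∈ F0 ++ Fl1 ∧ isUnit c l (elements M1)) ∧
    Fl2 = Fl1 ∧ C2 = C1 ∧ cf2 = cf1 ∧ ln2 = ln1

def r_unitPropagate (F0 : Formula) : RState → RState → Prop :=
  fun (M1, Fl1, C1, cf1, ln1) (M2, Fl2, C2, cf2, ln2) =>
    (∃ (c : Clause) (l : Literal), c ∈ F0 ++ Fl1 ∧ isUnit c l (elements M1) ∧
      M2 = M1 ++ [(l, false)]) ∧
    Fl2 = Fl1 ∧ C2 = C1 ∧ cf2 = cf1 ∧ ln2 = ln1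

def r_conflict (F0 : Formula) : RState → RState → Prop :=
  fun (M1, Fl1, C1, cf1, ln1) (M2, Fl2, C2, cf2, ln2) =>
    cf1 = false ∧ (∃ c : Clause, c ∈ F0 ++ Fl1 ∧ clauseFalse (elements M1) c ∧ C2 = c) ∧
    M2 = M1 ∧ Fl2 = Fl1 ∧ cf2 = true ∧ ln2 = ln1 ∧ C1 = C1

def r_explain (F0 : Formula) : RState → RState → Prop :=
  fun (M1, Fl1, C1, cf1, ln1) (M2, Fl2, C2, cf2, ln2) =>
    cf1 = true ∧ (∃ (l : Literal) (c : Clause), l ∈ C1 ∧ isReason c l.opp (elements M1) ∧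
      c ∈ F0 ++ Fl1 ∧ C2 = resolve C1 c l) ∧
    M2 = M1 ∧ Fl2 = Fl1 ∧ cf2 = true ∧ ln2 = ln1

def r_backjumpLearn : RState → RState → Prop :=
  fun (M1, Fl1, C1, cf1, _ln1) (M2, Fl2, C2, cf2, ln2) =>
    cf1 = true ∧ (∃ (l : Literal) (lv : Nat), isMinimalBackjumpLevel lv l C1 M1 ∧
      M2 = prefixToLevel lv M1 ++ [(l, false)]) ∧
    Fl2 = Fl1 ++ [C1] ∧ C2 = [] ∧ cf2 = false ∧ ln2 = true

def r_forget : RState → RState → Prop :=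
  fun (M1, Fl1, C1, cf1, ln1) (M2, Fl2, C2, cf2, ln2) =>
    cf1 = false ∧ ln1 = true ∧
    (∃ Fc : Formula, (∀ c ∈ Fc, c ∈ Fl1) ∧
      (∀ c ∈ Fc, ¬ ∃ l : Literal, isReason c l (elements M1)) ∧
      Fl2 = Fl1.filter (fun c => decide (c ∉ Fc))) ∧
    M2 = M1 ∧ C2 = C1 ∧ cf2 = cf1 ∧ ln2 = false

def r_restart : RState → RState → Prop :=
  fun (M1, Fl1, C1, cf1, ln1) (M2, Fl2, C2, cf2, ln2) =>
    cf1 = false ∧ ln1 = true ∧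
    M2 = prefixToLevel 0 M1 ∧ Fl2 = Fl1 ∧ C2 = C1 ∧ cf2 = cf1 ∧ ln2 = false

/-- The system without `forget` (with `restart`). -/
def stepF (F0 : Formula) (DecVars : Set Nat) (s1 s2 : RState) : Prop :=
  r_decide F0 DecVars s1 s2 ∨ r_unitPropagate F0 s1 s2 ∨ r_conflict F0 s1 s2 ∨
  r_explain F0 s1 s2 ∨ r_backjumpLearn s1 s2 ∨ r_restart s1 s2

/-- The full system with both `restart` and `forget`. -/
def stepAll (F0 : Formula) (DecVars : Set Nat) (s1 s2 : RState) : Prop :=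
  stepF F0 DecVars s1 s2 ∨ r_forget s1 s2

/-- Normalization of a formula: remove duplicate literals and duplicate clauses. -/
def normF (F : Formula) : Formula := (F.map List.dedup).dedup

theorem prefixTo_prefix (l : Literal) (M : Trail) : prefixTo l M <+: M :=
  ⟨(M.dropWhile (fun a => decide (a.1 ≠ l))).drop 1, by
    rw [prefixTo, List.append_assoc, List.take_append_drop, List.takeWhile_append_dropWhile]⟩

theorem decisions_sublist {M N : Trail} (h : M.Sublist N) : (decisions M).Sublist (decisions N) :=
  (h.filter _).map Prod.fst

theorem decisionsTo_subset_decisions (l : Literal) (M : Trail) :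
    decisionsTo l M ⊆ decisions M :=
  (decisions_sublist (prefixTo_prefix l M).sublist).subset

theorem valToForm_subset {u w : List Literal} (h : u ⊆ w) : valToForm u ⊆ valToForm w :=
  List.map_subset _ h

theorem isModel.mono {v : List Literal} {F G : Formula} (hG : isModel v G) (h : F ⊆ G) :
    isModel v F :=
  ⟨hG.1, fun c hc => hG.2 c (h hc)⟩

theorem not_formulaTrue_of_formulaFalse {u v : List Literal} {F : Formula} (hv : consistent v)
    (huv : u ⊆ v) (hF : formulaFalse u F) : ¬ formulaTrue v F := by
  intro hT
  obtain ⟨c, hcF, hc⟩ := hF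
  obtain ⟨l, hlc, hlv⟩ := hT c hcF
  exact hv ⟨l, hlv, huv (hc l hlc)⟩

/-- if every trail literal is entailed by the formula together with the
preceding decisions, and the trail falsifies the formula, then the formula extended by
unit clauses for all decisions is unsatisfiable. -/
theorem stmt6 (M : Trail) (F : Formula)
    (himpl : ∀ l ∈ elements M, entailsLit (F ++ valToForm (decisionsTo l M)) l)
    (hfalse : formulaFalse (elements M) F) :
    ¬ sat (F ++ valToForm (decisions M)) := by
  rintro ⟨v, hv⟩
  have hMv : elements M ⊆ v := fun l hl =>
    himpl l hl v <| hv.mono <| List.append_subset.2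
      ⟨List.subset_append_left _ _,
        List.Subset.trans (valToForm_subset (decisionsTo_subset_decisions l M))
          (List.subset_append_right _ _)⟩
  exact not_formulaTrue_of_formulaFalse hv.1 hMv hfalse (hv.mono (List.subset_append_left _ _)).2

end SatFormal
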